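/- Suppose F is convex and β-smooth (β > 0) with minimizer w*. Let η > 0, set the step size γ = 1/(β + 1/η), and let w ∈ ℝ^d and B ≥ 1. Then the expected one-step mini-batch SGD progress satisfies E_s[F(w − γ g_s(w))] − F(w*) ≤ ((β + 1/η)/2)·(‖w − w*‖² − E_s[‖(w − γ g_s(w)) − w*‖²]) + (η/2)·E_s[‖∇F(w) − g_s(w)‖²]. -/

import Mathlib

/-! For a single batch with gradient `g`, adding the first-order convexity inequality at `w` to the
descent lemma for the step `w - γ g` bounds `F (w - γ g) - F w*`. Because `1 / γ = β + 1 / η`, this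
bound falls short of `⟪∇F w - g, w - w*⟫ + (β + 1 / η) / 2 (‖w - w*‖² - ‖w - γ g - w*‖²)
+ η / 2 ‖∇F w - g‖²` by exactly the square `‖γ g + η (∇F w - g)‖² / (2η)`. Averaging over all
`n ^ B` batches removes the cross term `⟪∇F w - g, w - w*⟫`: each coordinate `s j` is uniform on
`Fin n`, so the mini-batch gradient is unbiased. -/

open scoped RealInnerProductSpace Gradient
open AffineMap Finset

section OneStep

variable {E : Type*} [NormedAddCommGroup E] [InnerProductSpace ℝ E]

theorem inner_sub_smul_add_norm_sq_le {β η γ : ℝ} (hβ : 0 ≤ β) (hη : 0 < η)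
    (hγ : γ = 1 / (β + 1 / η)) (G g u : E) :
    ⟪G, u - γ • g⟫ + β / 2 * ‖γ • g‖ ^ 2 ≤ ⟪G - g, u⟫
      + (β + 1 / η) / 2 * (‖u‖ ^ 2 - ‖u - γ • g‖ ^ 2) + η / 2 * ‖G - g‖ ^ 2 := by
  have hsquare : ⟪G - g, u⟫ + (β + 1 / η) / 2 * (‖u‖ ^ 2 - ‖u - γ • g‖ ^ 2)
      + η / 2 * ‖G - g‖ ^ 2 - (⟪G, u - γ • g⟫ + β / 2 * ‖γ • g‖ ^ 2)
      = ‖γ • g + η • (G - g)‖ ^ 2 / (2 * η) := by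
    simp only [norm_add_sq_real, norm_sub_sq_real, norm_smul, mul_pow, Real.norm_eq_abs, sq_abs,
      inner_smul_left, inner_smul_right, inner_sub_left, inner_sub_right,
      real_inner_self_eq_norm_sq, real_inner_comm u g, real_inner_comm u G, real_inner_comm g G,
      RCLike.conj_to_real]
    rw [hγ]
    field_simp
    ring
  linarith [show 0 ≤ ‖γ • g + η • (G - g)‖ ^ 2 / (2 * η) by positivity]

section Calculus

variable [CompleteSpace E] {F : E → ℝ} {x y : E}

theorem hasDerivAt_comp_lineMap {t : ℝ} (hF : DifferentiableAt ℝ F (lineMap x y t)) :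
    HasDerivAt (F ∘ lineMap x y) ⟪∇ F (lineMap x y t), y - x⟫ t :=
  hF.hasGradientAt.hasFDerivAt.comp_hasDerivAt t hasDerivAt_lineMap

theorem ConvexOn.add_inner_gradient_le (hconv : ConvexOn ℝ Set.univ F)
    (hF : DifferentiableAt ℝ F x) : F x + ⟪∇ F x, y - x⟫ ≤ F y := by
  have hline : ConvexOn ℝ Set.univ (F ∘ lineMap x y) := hconv.comp_affineMap (lineMap x y)
  have hslope := hline.le_slope_of_hasDerivAt (Set.mem_univ 0) (Set.mem_univ 1) zero_lt_one
    (hasDerivAt_comp_lineMap (by simpa using hF))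
  simp only [slope_def_field, Function.comp_apply, lineMap_apply_zero, lineMap_apply_one,
    sub_zero, div_one] at hslope
  linarith

theorem le_add_inner_gradient_add_sq (hF : Differentiable ℝ F) {β : ℝ}
    (hsmooth : ∀ x y, ‖∇ F x - ∇ F y‖ ≤ β * ‖x - y‖) (x y : E) :
    F y ≤ F x + ⟪∇ F x, y - x⟫ + β / 2 * ‖y - x‖ ^ 2 := by
  let φ : ℝ → ℝ := fun t ↦
    F (lineMap x y t) - t * ⟪∇ F x, y - x⟫ - β / 2 * t ^ 2 * ‖y - x‖ ^ 2
  have hderiv (t : ℝ) :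
      HasDerivAt φ (⟪∇ F (lineMap x y t) - ∇ F x, y - x⟫ - β * t * ‖y - x‖ ^ 2) t := by
    refine (((hasDerivAt_comp_lineMap (hF _)).sub
      ((hasDerivAt_id t).mul_const ⟪∇ F x, y - x⟫)).sub
      (((hasDerivAt_pow 2 t).const_mul (β / 2)).mul_const (‖y - x‖ ^ 2))).congr_deriv ?_
    simp only [inner_sub_left]
    ring
  have hderiv_le (t : ℝ) (ht : 0 < t) :
      ⟪∇ F (lineMap x y t) - ∇ F x, y - x⟫ ≤ β * t * ‖y - x‖ ^ 2 :=
    calc ⟪∇ F (lineMap x y t) - ∇ F x, y - x⟫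
        ≤ ‖∇ F (lineMap x y t) - ∇ F x‖ * ‖y - x‖ := real_inner_le_norm _ _
      _ ≤ β * ‖lineMap x y t - x‖ * ‖y - x‖ := by gcongr; exact hsmooth _ _
      _ = β * t * ‖y - x‖ ^ 2 := by
        rw [← vsub_eq_sub, lineMap_vsub_left, vsub_eq_sub, norm_smul, Real.norm_of_nonneg ht.le]
        ring
  have hanti : AntitoneOn φ (Set.Icc 0 1) := by
    refine antitoneOn_of_hasDerivWithinAt_nonpos (convex_Icc 0 1)
      (HasDerivAt.continuousOn fun t _ ↦ hderiv t) (fun t _ ↦ (hderiv t).hasDerivWithinAt)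
      fun t ht ↦ ?_
    rw [interior_Icc] at ht
    linarith [hderiv_le t ht.1]
  have hφ : φ 1 ≤ φ 0 :=
    hanti (Set.left_mem_Icc.2 zero_le_one) (Set.right_mem_Icc.2 zero_le_one) zero_le_one
  simp only [φ, lineMap_apply_zero, lineMap_apply_one] at hφ
  linarith

theorem ConvexOn.sub_le_of_inexact_gradient_step (hconv : ConvexOn ℝ Set.univ F)
    (hF : Differentiable ℝ F) {β η γ : ℝ} (hsmooth : ∀ x y, ‖∇ F x - ∇ F y‖ ≤ β * ‖x - y‖)
    (hβ : 0 ≤ β) (hη : 0 < η) (hγ : γ = 1 / (β + 1 / η)) (w w' g : E) :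
    F (w - γ • g) - F w' ≤ ⟪∇ F w - g, w - w'⟫
      + (β + 1 / η) / 2 * (‖w - w'‖ ^ 2 - ‖w - γ • g - w'‖ ^ 2) + η / 2 * ‖∇ F w - g‖ ^ 2 := by
  have hconvex := hconv.add_inner_gradient_le (y := w') (hF w)
  have hdescent := le_add_inner_gradient_add_sq hF hsmooth w (w - γ • g)
  have hstep := inner_sub_smul_add_norm_sq_le hβ hη hγ (∇ F w) g (w - w')
  rw [show w' - w = -(w - w') by abel, inner_neg_right] at hconvex
  rw [show w - γ • g - w = -(γ • g) by abel, inner_neg_right, norm_neg] at hdescent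
  rw [show w - γ • g - w' = w - w' - γ • g by abel]
  rw [inner_sub_right] at hstep
  linarith

theorem gradient_const_mul_sum {ι : Type*} [Fintype ι] {f : ι → E → ℝ} {x : E}
    (hf : ∀ i, DifferentiableAt ℝ (f i) x) (c : ℝ) :
    ∇ (fun y ↦ c * ∑ i, f i y) x = c • ∑ i, ∇ (f i) x := by
  refine HasGradientAt.gradient ?_
  rw [hasGradientAt_iff_hasFDerivAt, map_smulₛₗ, map_sum]
  exact (HasFDerivAt.fun_sum fun i _ ↦ (hf i).hasGradientAt).const_mul c

end Calculus

theorem sum_mean_sub_mean_comp_eq_zero {ι κ M : Type*} [Fintype ι] [DecidableEq ι] [Nonempty ι]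
    [Fintype κ] [Nonempty κ] [AddCommGroup M] [Module ℝ M] (v : κ → M) :
    ∑ s : ι → κ, ((Fintype.card κ : ℝ)⁻¹ • ∑ k, v k - (Fintype.card ι : ℝ)⁻¹ • ∑ j, v (s j))
      = 0 := by
  have hcoord (j : ι) :
      ∑ s : ι → κ, v (s j) = Fintype.card κ ^ (Fintype.card ι - 1) • ∑ k, v k := by
    simpa using Fintype.sum_piFinset_apply v univ j
  obtain ⟨m, hm⟩ := Nat.exists_eq_add_one_of_ne_zero (Fintype.card_ne_zero (α := ι))
  have hκ : (Fintype.card κ : ℝ) ≠ 0 := Nat.cast_ne_zero.2 Fintype.card_ne_zero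
  rw [sum_sub_distrib, sum_const, ← smul_sum, sum_comm]
  simp only [hcoord, sum_const, card_univ, Fintype.card_fun, hm, Nat.add_sub_cancel,
    ← Nat.cast_smul_eq_nsmul ℝ, smul_smul, ← sub_smul]
  refine smul_eq_zero_of_left ?_ _
  field_simp
  push_cast
  ring

theorem mean_sub_le_of_forall_sub_le {ι : Type*} [Fintype ι] [Nonempty ι] {a p q : ι → ℝ}
    {e : ι → E} {u : E} {b c k r : ℝ} (he : ∑ i, e i = 0)
    (h : ∀ i, a i - b ≤ ⟪e i, u⟫ + c * (r - p i) + k * q i) :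
    1 / (Fintype.card ι : ℝ) * ∑ i, a i - b ≤
      c * (r - 1 / (Fintype.card ι : ℝ) * ∑ i, p i)
        + k * (1 / (Fintype.card ι : ℝ) * ∑ i, q i) := by
  have hsum := sum_le_sum fun i (_ : i ∈ univ) ↦ h i
  simp only [sum_sub_distrib, sum_add_distrib, ← sum_inner, he, inner_zero_left, ← mul_sum,
    sum_const, card_univ, nsmul_eq_mul] at hsum
  have hN : (0 : ℝ) < Fintype.card ι := by exact_mod_cast Fintype.card_pos
  have := mul_le_mul_of_nonneg_left hsum (one_div_pos.2 hN).le
  field_simp at this ⊢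
  linarith

end OneStep

theorem minibatch_convex_one_step_general
    (d n B : ℕ) (hn : 1 ≤ n) (hB : 1 ≤ B)
    (f : Fin n → EuclideanSpace ℝ (Fin d) → ℝ)
    (hf : ∀ i, Differentiable ℝ (f i))
    (F : EuclideanSpace ℝ (Fin d) → ℝ)
    (hF : F = fun w => (1 / (n : ℝ)) * ∑ i, f i w)
    (hconv : ConvexOn ℝ Set.univ F)
    (β : ℝ) (hβ : 0 < β)
    (hFdiff : Differentiable ℝ F)
    (hsmooth : ∀ x y, ‖gradient F x - gradient F y‖ ≤ β * ‖x - y‖)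
    (wstar : EuclideanSpace ℝ (Fin d))
    (η : ℝ) (hη : 0 < η)
    (γ : ℝ) (hγ : γ = 1 / (β + 1 / η))
    (w : EuclideanSpace ℝ (Fin d)) :
    (1 / (n : ℝ) ^ B) *
        ∑ s : Fin B → Fin n,
          F (w - γ • ((1 / (B : ℝ)) • ∑ j, gradient (f (s j)) w))
      - F wstar
      ≤ ((β + 1 / η) / 2) *
          (‖w - wstar‖ ^ 2 -
            (1 / (n : ℝ) ^ B) *
              ∑ s : Fin B → Fin n,
                ‖(w - γ • ((1 / (B : ℝ)) • ∑ j, gradient (f (s j)) w)) - wstar‖ ^ 2)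
        + (η / 2) *
            ((1 / (n : ℝ) ^ B) *
              ∑ s : Fin B → Fin n,
                ‖gradient F w - (1 / (B : ℝ)) • ∑ j, gradient (f (s j)) w‖ ^ 2) := by
  have : Nonempty (Fin n) := ⟨⟨0, hn⟩⟩
  have : Nonempty (Fin B) := ⟨⟨0, hB⟩⟩
  have hgrad : ∇ F w = (1 / (n : ℝ)) • ∑ i, ∇ (f i) w := by
    rw [hF]
    exact gradient_const_mul_sum (fun i ↦ hf i w) _
  have hnoise : ∑ s : Fin B → Fin n, (∇ F w - (1 / (B : ℝ)) • ∑ j, ∇ (f (s j)) w) = 0 := by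
    simpa [hgrad] using sum_mean_sub_mean_comp_eq_zero (ι := Fin B) fun i ↦ ∇ (f i) w
  simpa using mean_sub_le_of_forall_sub_le hnoise fun s ↦
    hconv.sub_le_of_inexact_gradient_step hFdiff hsmooth hβ.le hη hγ w wstar _

/-- For `F` convex and β-smooth with minimizer `w*`, with step size
`γ = 1/(β + 1/η)`, the expected one-step mini-batch SGD progress satisfies
`E_s[F(w − γ g_s(w))] − F(w*) ≤ ((β + 1/η)/2)·(‖w − w*‖² − E_s[‖(w − γ g_s(w)) − w*‖²])
  + (η/2)·E_s[‖∇F(w) − g_s(w)‖²]`. -/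
theorem minibatch_convex_one_step
    (d n B : ℕ) (hd : 1 ≤ d) (hn : 1 ≤ n) (hB : 1 ≤ B)
    (f : Fin n → EuclideanSpace ℝ (Fin d) → ℝ)
    (hf : ∀ i, Differentiable ℝ (f i))
    (F : EuclideanSpace ℝ (Fin d) → ℝ)
    (hF : F = fun w => (1 / (n : ℝ)) * ∑ i, f i w)
    (hconv : ConvexOn ℝ Set.univ F)
    (β : ℝ) (hβ : 0 < β)
    (hFdiff : Differentiable ℝ F)
    (hsmooth : ∀ x y, ‖gradient F x - gradient F y‖ ≤ β * ‖x - y‖)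
    (wstar : EuclideanSpace ℝ (Fin d)) (hmin : ∀ v, F wstar ≤ F v)
    (η : ℝ) (hη : 0 < η)
    (γ : ℝ) (hγ : γ = 1 / (β + 1 / η))
    (w : EuclideanSpace ℝ (Fin d)) :
    (1 / (n : ℝ) ^ B) *
        ∑ s : Fin B → Fin n,
          F (w - γ • ((1 / (B : ℝ)) • ∑ j, gradient (f (s j)) w))
      - F wstar
      ≤ ((β + 1 / η) / 2) *
          (‖w - wstar‖ ^ 2 -
            (1 / (n : ℝ) ^ B) *
              ∑ s : Fin B → Fin n,
                ‖(w - γ • ((1 / (B : ℝ)) • ∑ j, gradient (f (s j)) w)) - wstar‖ ^ 2)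
        + (η / 2) *
            ((1 / (n : ℝ) ^ B) *
              ∑ s : Fin B → Fin n,
                ‖gradient F w - (1 / (B : ℝ)) • ∑ j, gradient (f (s j)) w‖ ^ 2) :=
  minibatch_convex_one_step_general d n B hn hB f hf F hF hconv β hβ hFdiff hsmooth wstar η hη γ hγ
    w
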